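/- Let R be a Dedekind-finite unital ring with involution and a ∈ R. Then a is core invertible if and only if there exists a projection p such that pa = 0 and a*a + p is invertible. In that case, a° = (a*a + p)^{-1} a*. -/

import Mathlib

/-! For a projection `p` with `p * a = 0` one has `star a * a + p = star (a + p) * (a + p)`, so in a
Dedekind-finite ring `star a * a + p` is invertible exactly when `a + p` is. If `x` is the core
inverse of `a`, then `p = 1 - a * x` works, `x + 1 - x * a` being a left inverse of `a + p`.
Conversely, if `a + p` is invertible then `(a + p)⁻¹ * (1 - p)` is the core inverse of `a`.
The formula follows from `(star a * a + p) * x = star a`. -/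

/-- `x` is the core inverse of `a`. -/
def IsCoreInverse {R : Type*} [Ring R] [StarRing R] (a x : R) : Prop :=
  a * x * a = a ∧
    {y : R | ∃ r : R, y = x * r} = {y : R | ∃ r : R, y = a * r} ∧
    {y : R | ∃ r : R, y = r * x} = {y : R | ∃ r : R, y = r * star a}

theorem setOf_exists_eq_mul_eq_iff {M : Type*} [Monoid M] {x a : M} :
    {y : M | ∃ r, y = x * r} = {y : M | ∃ r, y = a * r} ↔ a ∣ x ∧ x ∣ a := by
  constructor
  · intro h
    have hx : x ∈ {y : M | ∃ r, y = x * r} := ⟨1, (mul_one x).symm⟩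
    have ha : a ∈ {y : M | ∃ r, y = a * r} := ⟨1, (mul_one a).symm⟩
    rw [h] at hx
    rw [← h] at ha
    exact ⟨hx, ha⟩
  · rintro ⟨⟨s, rfl⟩, ⟨t, ht⟩⟩
    ext y
    constructor
    · rintro ⟨r, rfl⟩
      exact ⟨s * r, (mul_assoc a s r)⟩
    · rintro ⟨r, rfl⟩
      exact ⟨t * r, by rw [← mul_assoc, ← ht]⟩

theorem setOf_exists_eq_mul_eq_iff' {M : Type*} [Monoid M] {x a : M} :
    {y : M | ∃ r, y = r * x} = {y : M | ∃ r, y = r * a} ↔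
      (∃ s, x = s * a) ∧ ∃ t, a = t * x := by
  constructor
  · intro h
    have hx : x ∈ {y : M | ∃ r, y = r * x} := ⟨1, (one_mul x).symm⟩
    have ha : a ∈ {y : M | ∃ r, y = r * a} := ⟨1, (one_mul a).symm⟩
    rw [h] at hx
    rw [← h] at ha
    exact ⟨hx, ha⟩
  · rintro ⟨⟨s, rfl⟩, ⟨t, ht⟩⟩
    ext y
    constructor
    · rintro ⟨r, rfl⟩
      exact ⟨r * s, (mul_assoc r s a).symm⟩
    · rintro ⟨r, rfl⟩
      exact ⟨r * t, by rw [mul_assoc, ← ht]⟩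

section CoreInverse

variable {R : Type*} [Ring R] [StarRing R] {a x p : R}

theorem isCoreInverse_iff :
    IsCoreInverse a x ↔
      a * x * a = a ∧ (a ∣ x ∧ x ∣ a) ∧ ((∃ s, x = s * star a) ∧ ∃ t, star a = t * x) := by
  rw [IsCoreInverse, setOf_exists_eq_mul_eq_iff, setOf_exists_eq_mul_eq_iff']

namespace IsCoreInverse

variable (h : IsCoreInverse a x)
include h

theorem mul_inv_mul : a * x * a = a := h.1

theorem isSelfAdjoint_mul : IsSelfAdjoint (a * x) := by
  obtain ⟨haxa, -, ⟨r, hr⟩, -⟩ := isCoreInverse_iff.1 h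
  have hstar : star a * star (a * x) = star a := by
    simpa only [star_mul] using congrArg star haxa
  have hproj : a * x * star (a * x) = a * x := by
    nth_rw 1 [hr]
    rw [← mul_assoc, mul_assoc (a * r), hstar, mul_assoc, ← hr]
  rw [IsSelfAdjoint, ← hproj, star_mul, star_star, hproj]

theorem star_mul_mul_inv : star a * (a * x) = star a := by
  simpa only [star_mul, h.isSelfAdjoint_mul.star_eq] using congrArg star h.mul_inv_mul

theorem inv_mul_inv : x * a * x = x := by
  obtain ⟨-, -, ⟨r, hr⟩, -⟩ := isCoreInverse_iff.1 h
  calc x * a * x = r * (star a * (a * x)) := by rw [hr]; noncomm_ring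
    _ = x := by rw [h.star_mul_mul_inv, hr]

theorem inv_mul_mul_self : x * a * a = a := by
  obtain ⟨-, ⟨-, t, ht⟩, -⟩ := isCoreInverse_iff.1 h
  nth_rw 2 [ht]
  rw [← mul_assoc, h.inv_mul_inv, ← ht]

theorem isStarProjection_one_sub : IsStarProjection (1 - a * x) :=
  IsStarProjection.one_sub
    ⟨by rw [IsIdempotentElem, ← mul_assoc, h.mul_inv_mul], h.isSelfAdjoint_mul⟩

theorem one_sub_mul_mul_self : (1 - a * x) * a = 0 := by
  rw [sub_mul, one_mul, h.mul_inv_mul, sub_self]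

theorem isUnit_add_one_sub [IsDedekindFiniteMonoid R] : IsUnit (a + (1 - a * x)) := by
  refine IsUnit.of_mul_eq_one_right (x + 1 - x * a) ?_
  have expand : (x + 1 - x * a) * (a + (1 - a * x)) =
      x + 1 - x * a * x - (x * a * a - a) * (1 - x) := by noncomm_ring
  rw [expand, h.inv_mul_inv, h.inv_mul_mul_self, sub_self, zero_mul, sub_zero, add_sub_cancel_left]

theorem eq_inverse_mul_star (hpa : p * a = 0) (hu : IsUnit (star a * a + p)) :
    x = Ring.inverse (star a * a + p) * star a := by
  obtain ⟨-, ⟨⟨s, rfl⟩, -⟩, -⟩ := isCoreInverse_iff.1 h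
  have hux : (star a * a + p) * (a * s) = star a := by
    rw [add_mul, ← mul_assoc p, hpa, zero_mul, add_zero, mul_assoc, h.star_mul_mul_inv]
  calc a * s = Ring.inverse (star a * a + p) * (star a * a + p) * (a * s) := by
        rw [Ring.inverse_mul_cancel _ hu, one_mul]
    _ = Ring.inverse (star a * a + p) * star a := by rw [mul_assoc, hux]

end IsCoreInverse

namespace IsStarProjection

variable (hp : IsStarProjection p) (hpa : p * a = 0)
include hp hpa

theorem star_mul_eq_zero : star a * p = 0 := by
  simpa only [star_mul, hp.isSelfAdjoint.star_eq, star_zero] using congrArg star hpa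

theorem star_add_mul_add : star (a + p) * (a + p) = star a * a + p := by
  have expand : star (a + p) * (a + p) = star a * a + star a * p + p * a + p * p := by
    rw [star_add, hp.isSelfAdjoint.star_eq]; noncomm_ring
  rw [expand, hp.star_mul_eq_zero hpa, hpa, hp.isIdempotentElem.eq]
  abel

theorem isUnit_star_mul_add_iff [IsDedekindFiniteMonoid R] :
    IsUnit (star a * a + p) ↔ IsUnit (a + p) := by
  rw [← hp.star_add_mul_add hpa]
  refine ⟨fun hu => ?_, fun hu => (isUnit_star.2 hu).mul hu⟩
  refine IsUnit.of_mul_eq_one_right (Ring.inverse (star (a + p) * (a + p)) * star (a + p)) ?_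
  rw [mul_assoc, Ring.inverse_mul_cancel _ hu]

theorem isCoreInverse_inverse_mul_one_sub (hu : IsUnit (a + p)) :
    IsCoreInverse a (Ring.inverse (a + p) * (1 - p)) := by
  set w := Ring.inverse (a + p)
  have hwl : w * (a + p) = 1 := Ring.inverse_mul_cancel _ hu
  have hwr : (a + p) * w = 1 := Ring.mul_inverse_cancel _ hu
  have hpw : p * w = p := by
    simpa only [mul_add, ← mul_assoc, hpa, hp.isIdempotentElem.eq, zero_add, mul_one]
      using congrArg (p * ·) hwr
  have haw : a * w = 1 - p := by rw [← hwr, add_mul, hpw, add_sub_cancel_right]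
  have hwp : star w * p = p := by
    simpa only [star_mul, hp.isSelfAdjoint.star_eq] using congrArg star hpw
  have hwa : w * a * a = a := by
    rw [eq_sub_of_add_eq ((mul_add w a p).symm.trans hwl), sub_mul, one_mul, mul_assoc w p,
      hpa, mul_zero, sub_zero]
  have hax : a * (w * (1 - p)) = 1 - p := by
    rw [← mul_assoc, haw, hp.one_sub.isIdempotentElem.eq]
  have hpx : p * (w * (1 - p)) = 0 := by rw [← mul_assoc, hpw, hp.mul_one_sub_self]
  refine isCoreInverse_iff.2 ⟨?_, ⟨?_, ?_⟩, ⟨?_, ?_⟩⟩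
  · rw [hax, sub_mul, one_mul, hpa, sub_zero]
  · refine ⟨w * (1 - p) * (w * (1 - p)), ?_⟩
    rw [← mul_assoc, hax, sub_mul, one_mul, hpx, sub_zero]
  · refine ⟨a * a, ?_⟩
    rw [← mul_assoc, mul_assoc w, sub_mul, one_mul, hpa, sub_zero, hwa]
  · refine ⟨w * star w, ?_⟩
    have hws : star w * star a = 1 - p := by
      rw [← hwp, eq_sub_iff_add_eq, ← mul_add, ← hp.isSelfAdjoint.star_eq, ← star_add,
        ← star_mul, hwr, star_one]
    rw [mul_assoc, hws]
  · refine ⟨star (a + p) * (a + p), ?_⟩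
    rw [mul_assoc, ← mul_assoc (a + p), hwr, one_mul, star_add, hp.isSelfAdjoint.star_eq,
      add_mul, mul_sub, mul_one, hp.star_mul_eq_zero hpa, sub_zero, hp.mul_one_sub_self,
      add_zero]

end IsStarProjection

end CoreInverse

theorem stmt_14 {R : Type*} [Ring R] [StarRing R]
    (hdf : ∀ x y : R, x * y = 1 → y * x = 1) (a : R) :
    ((∃ x : R, IsCoreInverse a x) ↔
      (∃ p : R, p ^ 2 = p ∧ star p = p ∧ p * a = 0 ∧ IsUnit (star a * a + p))) ∧
    (∀ x p : R, IsCoreInverse a x → p ^ 2 = p → star p = p → p * a = 0 →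
      IsUnit (star a * a + p) → x = Ring.inverse (star a * a + p) * star a) := by
  have : IsDedekindFiniteMonoid R := ⟨hdf _ _⟩
  refine ⟨⟨?_, ?_⟩, fun x p hx _ _ hpa hu => hx.eq_inverse_mul_star hpa hu⟩
  · rintro ⟨x, hx⟩
    have hp := hx.isStarProjection_one_sub
    exact ⟨1 - a * x, hp.pow_eq two_ne_zero, hp.isSelfAdjoint.star_eq, hx.one_sub_mul_mul_self,
      (hp.isUnit_star_mul_add_iff hx.one_sub_mul_mul_self).2 hx.isUnit_add_one_sub⟩
  · rintro ⟨p, hp2, hps, hpa, hu⟩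
    have hp : IsStarProjection p := ⟨by rw [IsIdempotentElem, ← sq, hp2], hps⟩
    exact ⟨_, hp.isCoreInverse_inverse_mul_one_sub hpa ((hp.isUnit_star_mul_add_iff hpa).1 hu)⟩
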